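/- Let R = k{x₁,…,xₙ; Q, ⪯} be a PBW algebra, let M ⊆ R^s be an R-sub-bimodule, and let H = [H₁; H₂] ∈ M_{(s+p)×q}(R) (H₁ ∈ M_{s×q}(R), H₂ ∈ M_{p×q}(R)) satisfy: (i) for every h = (h₁,…,h_s) ∈ (R^env)^s, Σ_{l=1}^s h_l·(H₁)_l = Σ_{l=1}^s (𝔪(h_l)⊗1)·(H₁)_l in R^q; and (ii) M = {h ∈ R^s : there exists h'' ∈ (R^env)^p with (h⊗1, h'') ∈ Syz(H)}. Measure exponents in (R^env)^{s+p} using the standard-monomial basis of R^env, any one of the orders ⪯^c, ⪯_c, ⪯*, ⪯_* on ℕ^{2n}, and the POT order on ℕ^{2n}×{1,…,s+p}; measure exponents in R^s using the standard-monomial basis of R, ⪯, and the POT order on ℕⁿ×{1,…,s}. If {h₁,…,h_t} is a left Gröbner basis of the left R^env-module Syz(H) ⊆ (R^env)^{s+p}, with hᵢ = (hᵢ', hᵢ''), hᵢ' ∈ (R^env)^s, then {𝔪^s(h₁'),…,𝔪^s(h_t')} ∖ {0} is a two-sided Gröbner basis of M for the POT order. -/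

import Mathlib

open TensorProduct MulOpposite

set_option synthInstance.maxHeartbeats 1000000
set_option maxHeartbeats 1000000

noncomputable section

/-- An admissible order on a commutative monoid of exponents: a total order for which `0`
is smallest and which is compatible with addition. -/
def IsAdmissible {E : Type*} [AddCommMonoid E] (le : E → E → Prop) : Prop :=
  (∀ a b, le a b ∨ le b a) ∧
  (∀ a b, le a b → le b a → a = b) ∧
  (∀ a b c, le a b → le b c → le a c) ∧
  (∀ a, le 0 a) ∧
  (∀ a b c, le a b → le (a + c) (b + c))

/-- The strict part of an order. -/
def ltOf {E : Type*} (le : E → E → Prop) (a b : E) : Prop := le a b ∧ a ≠ b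

/-- `α^op`: the reversal of a multi-exponent. -/
def expRev {n : ℕ} (α : Fin n → ℕ) : Fin n → ℕ := fun i => α i.rev

/-- The order `⪯^op` on exponents: `α ⪯^op β ↔ α^op ⪯ β^op`. -/
def opOrd {n : ℕ} (le : (Fin n → ℕ) → (Fin n → ℕ) → Prop) :
    (Fin n → ℕ) → (Fin n → ℕ) → Prop := fun a b => le (expRev a) (expRev b)

/-- The up-component composition order `⪯^c` on `ℕⁿ × ℕⁿ`. -/
def upCompOrd {n : ℕ} (le : (Fin n → ℕ) → (Fin n → ℕ) → Prop) :
    ((Fin n → ℕ) × (Fin n → ℕ)) → ((Fin n → ℕ) × (Fin n → ℕ)) → Prop := fun a b =>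
  a = b ∨ ltOf le (a.1 + expRev a.2) (b.1 + expRev b.2) ∨
    (a.1 + expRev a.2 = b.1 + expRev b.2 ∧ ltOf le (expRev a.2) (expRev b.2))

/-- The down-component composition order `⪯_c` on `ℕⁿ × ℕⁿ`. -/
def downCompOrd {n : ℕ} (le : (Fin n → ℕ) → (Fin n → ℕ) → Prop) :
    ((Fin n → ℕ) × (Fin n → ℕ)) → ((Fin n → ℕ) × (Fin n → ℕ)) → Prop := fun a b =>
  a = b ∨ ltOf le (a.1 + expRev a.2) (b.1 + expRev b.2) ∨
    (a.1 + expRev a.2 = b.1 + expRev b.2 ∧ ltOf le a.1 b.1)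

/-- The elimination order `⪯*` on `ℕⁿ × ℕⁿ` built from `⪯` and `⪯^op`. -/
def elimUpOrd {n : ℕ} (le : (Fin n → ℕ) → (Fin n → ℕ) → Prop) :
    ((Fin n → ℕ) × (Fin n → ℕ)) → ((Fin n → ℕ) × (Fin n → ℕ)) → Prop := fun a b =>
  a = b ∨ ltOf le a.1 b.1 ∨ (a.1 = b.1 ∧ ltOf (opOrd le) a.2 b.2)

/-- The elimination order `⪯_*` on `ℕⁿ × ℕⁿ` built from `⪯` and `⪯^op`. -/
def elimDownOrd {n : ℕ} (le : (Fin n → ℕ) → (Fin n → ℕ) → Prop) :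
    ((Fin n → ℕ) × (Fin n → ℕ)) → ((Fin n → ℕ) × (Fin n → ℕ)) → Prop := fun a b =>
  a = b ∨ ltOf (opOrd le) a.2 b.2 ∨ (a.2 = b.2 ∧ ltOf le a.1 b.1)

/-- The strict TOP (term over position) order on `I × Fin m` built from a strict order on `I`. -/
def topLt {I : Type*} {m : ℕ} (lt : I → I → Prop) (a b : I × Fin m) : Prop :=
  lt a.1 b.1 ∨ (a.1 = b.1 ∧ b.2 < a.2)

/-- The strict POT (position over term) order on `I × Fin m` built from a strict order on `I`. -/
def potLt {I : Type*} {m : ℕ} (lt : I → I → Prop) (a b : I × Fin m) : Prop :=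
  b.2 < a.2 ∨ (a.2 = b.2 ∧ lt a.1 b.1)

/-- The standard monomial `x^α = x₁^{α₁} ⋯ xₙ^{αₙ}` (ordered product). -/
def stdMon {n : ℕ} {A : Type*} [Monoid A] (x : Fin n → A) (α : Fin n → ℕ) : A :=
  ((List.finRange n).map fun i => x i ^ α i).prod

/-- The quantum relation `xⱼxᵢ − qᵢⱼ xᵢxⱼ − pᵢⱼ` (for `i < j`) as an element of the free
algebra; here `pᵢⱼ` is recorded by its coefficients on standard monomials. -/
def quantumRel (k : Type*) [Field k] {n : ℕ} (q : Fin n → Fin n → k)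
    (p : Fin n → Fin n → ((Fin n → ℕ) →₀ k)) (i j : Fin n) : FreeAlgebra k (Fin n) :=
  FreeAlgebra.ι k j * FreeAlgebra.ι k i
    - q i j • (FreeAlgebra.ι k i * FreeAlgebra.ι k j)
    - (p i j).sum fun γ c => c • stdMon (FreeAlgebra.ι k) γ

/-- `R` is the PBW algebra `k{x₁,…,xₙ; Q, ⪯}`, where the relation for `i < j` reads
`xⱼxᵢ = qᵢⱼ xᵢxⱼ + pᵢⱼ`: the order is admissible, the `q`'s are nonzero, the tails `p` are
bounded by `⪯`, the canonical map from the free algebra is surjective with kernel the two-sided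
ideal generated by the relations, and the standard monomials form a `k`-basis. -/
def IsPBW (k : Type*) [Field k] {n : ℕ} (R : Type*) [Ring R] [Algebra k R]
    (x : Fin n → R) (q : Fin n → Fin n → k) (p : Fin n → Fin n → ((Fin n → ℕ) →₀ k))
    (le : (Fin n → ℕ) → (Fin n → ℕ) → Prop) : Prop :=
  IsAdmissible le ∧
  (∀ i j : Fin n, i < j → q i j ≠ 0) ∧
  (∀ i j : Fin n, i < j → ∀ γ ∈ (p i j).support,
      ltOf le γ (Pi.single i 1 + Pi.single j 1)) ∧
  Function.Surjective (FreeAlgebra.lift k x) ∧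
  (∀ a : FreeAlgebra k (Fin n),
      FreeAlgebra.lift k x a = 0 ↔
        a ∈ TwoSidedIdeal.span {y | ∃ i j : Fin n, i < j ∧ y = quantumRel k q p i j}) ∧
  LinearIndependent k (stdMon x) ∧
  Submodule.span k (Set.range (stdMon x)) = ⊤

section Env

variable {k R : Type*} [Field k] [Ring R] [Algebra k R]

/-- The left `R^env = R ⊗[k] Rᵐᵒᵖ`-module structure on `R`, given by
`(r ⊗ r') • f = r * f * r'`. -/
noncomputable instance (priority := 100) envModule : Module (R ⊗[k] Rᵐᵒᵖ) R :=
  TensorProduct.Algebra.module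

/-- The multiplication map `𝔪 : R^env → R`, `r ⊗ r' ↦ r r'`, as a morphism of left
`R^env`-modules. -/
noncomputable def mulE (k R : Type*) [Field k] [Ring R] [Algebra k R] :
    (R ⊗[k] Rᵐᵒᵖ) →ₗ[R ⊗[k] Rᵐᵒᵖ] R :=
  LinearMap.toSpanSingleton _ _ (1 : R)

/-- The map `𝔪^s : (R^env)^s → R^s` applying `𝔪` coordinatewise, as a morphism of left
`R^env`-modules. -/
noncomputable def mulS (k R : Type*) [Field k] [Ring R] [Algebra k R] (s : ℕ) :
    (Fin s → R ⊗[k] Rᵐᵒᵖ) →ₗ[R ⊗[k] Rᵐᵒᵖ] (Fin s → R) :=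
  LinearMap.pi fun i => (mulE k R).comp (LinearMap.proj i)

/-- `f ⊗ 1 := (f₁ ⊗ 1, …, f_s ⊗ 1)`. -/
def tensorOne (k : Type*) [Field k] {R : Type*} [Ring R] [Algebra k R] {s : ℕ}
    (f : Fin s → R) : Fin s → R ⊗[k] Rᵐᵒᵖ := fun i => f i ⊗ₜ[k] (1 : Rᵐᵒᵖ)

/-- `1 ⊗ f := (1 ⊗ f₁, …, 1 ⊗ f_s)`. -/
def oneTensor (k : Type*) [Field k] {R : Type*} [Ring R] [Algebra k R] {s : ℕ}
    (f : Fin s → R) : Fin s → R ⊗[k] Rᵐᵒᵖ := fun i => (1 : R) ⊗ₜ[k] op (f i)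

/-- The map `(h₁,…,h_m) ↦ Σᵢ hᵢ • wᵢ`, whose kernel is the (two-sided/left) syzygy module
of the family `w`. -/
noncomputable def syzMap (A : Type*) [Ring A] {M : Type*} [AddCommGroup M] [Module A M]
    {ι : Type*} [Fintype ι] (w : ι → M) : (ι → A) →ₗ[A] M where
  toFun h := ∑ l, h l • w l
  map_add' h h' := by simp [add_smul, Finset.sum_add_distrib]
  map_smul' a h := by simp [mul_smul, Finset.smul_sum]

end Env

/-- `e` is the exponent (leading index) of the nonzero element `h` of a free module of rank `m`
over an algebra with a standard-monomial basis `b` indexed by `I`, with respect to a strict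
order `lt` on `I × Fin m`: the coordinate of `h` at `e` is nonzero and every other index with
nonzero coordinate is smaller. -/
def IsExpOf {k R0 I : Type*} [Field k] [AddCommGroup R0] [Module k R0] {m : ℕ}
    (b : Module.Basis I k R0) (lt : I × Fin m → I × Fin m → Prop)
    (h : Fin m → R0) (e : I × Fin m) : Prop :=
  b.repr (h e.2) e.1 ≠ 0 ∧ ∀ β i, b.repr (h i) β ≠ 0 → (β, i) = e ∨ lt ((β, i)) e

/-- `G` is a Gröbner basis of the `A`-submodule `N` of the free module `(Fin m → R0)`:
`G ⊆ N \ {0}`, `G` generates `N` over `A`, and the leading exponent of every nonzero element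
of `N` is a translate (by some `δ`) of the leading exponent of some element of `G`, in the
same component.  Taking `A = R^env` acting on `R0 = R^env` gives left Gröbner bases, and
taking `A = R^env` acting on `R0 = R` gives two-sided Gröbner bases. -/
def IsGB {k R0 A I : Type*} [Field k] [AddCommGroup R0] [Module k R0] [Ring A] [Add I]
    {m : ℕ} [Module A (Fin m → R0)]
    (b : Module.Basis I k R0) (lt : I × Fin m → I × Fin m → Prop)
    (N : Submodule A (Fin m → R0)) (G : Set (Fin m → R0)) : Prop :=
  G ⊆ (N : Set (Fin m → R0)) \ {0} ∧ Submodule.span A G = N ∧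
  ∀ h, h ∈ N → h ≠ 0 →
    ∃ g ∈ G, ∃ γ δ i, IsExpOf b lt g (γ, i) ∧ IsExpOf b lt h (γ + δ, i)

end

noncomputable section AuxOrd

/-- Maximal element of a nonempty finite set w.r.t. a transitive trichotomous relation. -/
theorem aux_exists_rel_max {ι : Type*} (lt : ι → ι → Prop)
    (htri : ∀ a b, a = b ∨ lt a b ∨ lt b a) (htr : ∀ a b c, lt a b → lt b c → lt a c)
    (S : Finset ι) : S.Nonempty → ∃ e ∈ S, ∀ e' ∈ S, e' = e ∨ lt e' e := by
  classical
  induction S using Finset.induction_on with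
  | empty => intro hS; exact absurd hS (by simp)
  | @insert a S' hxS ih =>
    intro _
    by_cases hS' : S'.Nonempty
    · obtain ⟨e, heS, hmax⟩ := ih hS'
      rcases htri a e with h | h | h
      · refine ⟨e, Finset.mem_insert_of_mem heS, fun e' he' => ?_⟩
        rcases Finset.mem_insert.1 he' with rfl | he'
        · exact Or.inl h
        · exact hmax e' he'
      · refine ⟨e, Finset.mem_insert_of_mem heS, fun e' he' => ?_⟩
        rcases Finset.mem_insert.1 he' with rfl | he'
        · exact Or.inr h
        · exact hmax e' he'
      · refine ⟨a, Finset.mem_insert_self _ _, fun e' he' => ?_⟩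
        rcases Finset.mem_insert.1 he' with rfl | he'
        · exact Or.inl rfl
        · rcases hmax e' he' with rfl | h'
          · exact Or.inr h
          · exact Or.inr (htr _ _ _ h' h)
    · rw [Finset.not_nonempty_iff_eq_empty] at hS'; subst hS'
      refine ⟨a, Finset.mem_insert_self _ _, fun e' he' => ?_⟩
      rcases Finset.mem_insert.1 he' with rfl | he'
      · exact Or.inl rfl
      · simp at he'

variable {n : ℕ} {le : (Fin n → ℕ) → (Fin n → ℕ) → Prop}

theorem adm_refl (h : IsAdmissible le) (a : Fin n → ℕ) : le a a := (h.1 a a).elim id id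

theorem adm_le_of_forall_le (h : IsAdmissible le) {a b : Fin n → ℕ} (hab : ∀ i, a i ≤ b i) :
    le a b := by
  have hb : b = (b - a) + a := by
    funext i; simp only [Pi.add_apply, Pi.sub_apply]
    have := hab i; omega
  have h0 := h.2.2.2.2 0 (b - a) a (h.2.2.2.1 (b - a))
  rw [zero_add] at h0; rw [hb]; exact h0

theorem adm_zero_eq (h : IsAdmissible le) {a : Fin n → ℕ} (ha : le a 0) : a = 0 :=
  h.2.1 a 0 ha (h.2.2.2.1 a)

theorem ltOf_le_trans (h : IsAdmissible le) {a b c : Fin n → ℕ}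
    (h1 : ltOf le a b) (h2 : le b c) : ltOf le a c := by
  refine ⟨h.2.2.1 _ _ _ h1.1 h2, fun hac => ?_⟩
  subst hac
  exact h1.2 (h.2.1 a b h1.1 h2)

theorem le_ltOf_trans (h : IsAdmissible le) {a b c : Fin n → ℕ}
    (h1 : le a b) (h2 : ltOf le b c) : ltOf le a c := by
  refine ⟨h.2.2.1 _ _ _ h1 h2.1, fun hac => ?_⟩
  subst hac
  exact h2.2 (h.2.1 b a h2.1 h1)

theorem ltOf_trans (h : IsAdmissible le) {a b c : Fin n → ℕ}
    (h1 : ltOf le a b) (h2 : ltOf le b c) : ltOf le a c := ltOf_le_trans h h1 h2.1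

theorem ltOf_add_right (h : IsAdmissible le) {a b : Fin n → ℕ} (c : Fin n → ℕ)
    (h1 : ltOf le a b) : ltOf le (a + c) (b + c) := by
  refine ⟨h.2.2.2.2 _ _ _ h1.1, fun hac => ?_⟩
  apply h1.2
  funext i
  have := congrFun hac i
  simp only [Pi.add_apply] at this
  omega

theorem ltOf_add_left (h : IsAdmissible le) {a b : Fin n → ℕ} (c : Fin n → ℕ)
    (h1 : ltOf le a b) : ltOf le (c + a) (c + b) := by
  rw [add_comm c a, add_comm c b]; exact ltOf_add_right h c h1

theorem adm_wf (h : IsAdmissible le) : WellFounded (ltOf le) := by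
  haveI : IsIrrefl (Fin n → ℕ) (ltOf le) := ⟨fun a h' => h'.2 rfl⟩
  haveI : IsTrans (Fin n → ℕ) (ltOf le) := ⟨fun a b c h1 h2 => ltOf_trans h h1 h2⟩
  haveI : IsStrictOrder (Fin n → ℕ) (ltOf le) := {}
  rw [RelEmbedding.wellFounded_iff_isEmpty]
  constructor
  intro f
  have hpwo : @WellQuasiOrdered (Fin n → ℕ) (· ≤ ·) := wellQuasiOrdered_le
  obtain ⟨m1, m2, h12, hle12⟩ := hpwo (fun i => f i)
  have hlt : ltOf le (f m2) (f m1) := f.map_rel_iff.2 h12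
  have hle' : le (f m1) (f m2) := adm_le_of_forall_le h (fun i => hle12 i)
  exact hlt.2 (h.2.1 _ _ hlt.1 hle')

end AuxOrd

noncomputable section AuxStdMon

variable {n : ℕ} {A : Type*} [Monoid A]

theorem stdMon_zero (x : Fin n → A) : stdMon x 0 = 1 := by
  apply List.prod_eq_one
  intro a ha
  simp only [List.mem_map] at ha
  obtain ⟨i, _, rfl⟩ := ha
  simp

theorem stdMon_succ (x : Fin (n + 1) → A) (c : Fin (n + 1) → ℕ) :
    stdMon x c = x 0 ^ c 0 * stdMon (fun j => x j.succ) (fun j => c j.succ) := by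
  unfold stdMon
  rw [List.finRange_succ, List.map_cons, List.prod_cons, List.map_map]
  rfl

theorem stdMon_mul_single : ∀ {n : ℕ} (x : Fin n → A) (c : Fin n → ℕ) (i : Fin n),
    (∀ j, i < j → c j = 0) → stdMon x c * x i = stdMon x (c + Pi.single i 1) := by
  intro n
  induction n with
  | zero => intro x c i hc; exact absurd i.isLt (by omega)
  | succ m ih =>
    intro x c i hc
    rcases Fin.eq_zero_or_eq_succ i with rfl | ⟨j, rfl⟩
    · have hz : (fun j : Fin m => c j.succ) = 0 := by
        funext j; exact hc j.succ (Fin.succ_pos j)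
      rw [stdMon_succ, stdMon_succ, hz, stdMon_zero, mul_one]
      have hz' : (fun j : Fin m => (c + Pi.single (0 : Fin (m + 1)) 1 : Fin (m+1) → ℕ) j.succ) = 0 := by
        funext j
        simp only [Pi.add_apply]
        rw [Pi.single_eq_of_ne (Fin.succ_ne_zero j)]
        exact hc j.succ (Fin.succ_pos j)
      rw [hz', stdMon_zero, mul_one]
      have h0 : (c + Pi.single (0 : Fin (m + 1)) 1 : Fin (m+1) → ℕ) 0 = c 0 + 1 := by
        simp
      rw [h0, pow_succ]
    · rw [stdMon_succ, stdMon_succ]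
      have h0 : (c + Pi.single j.succ 1 : Fin (m+1) → ℕ) 0 = c 0 := by
        simp only [Pi.add_apply]
        rw [Pi.single_eq_of_ne (Ne.symm (Fin.succ_ne_zero j))]
        simp
      rw [h0, mul_assoc]
      congr 1
      have hshift : (fun m' : Fin m => (c + Pi.single j.succ 1 : Fin (m+1) → ℕ) m'.succ)
          = (fun m' => c m'.succ) + Pi.single j 1 := by
        funext m'
        simp only [Pi.add_apply]
        congr 1
        by_cases hmj : m' = j
        · subst hmj; simp
        · rw [Pi.single_eq_of_ne hmj, Pi.single_eq_of_ne (fun hh => hmj (Fin.succ_injective _ hh))]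
      rw [hshift] at *
      exact ih (fun j' => x j'.succ) (fun j' => c j'.succ) j
        (fun j' hj' => hc j'.succ (by simpa using hj'))

theorem stdMon_single (x : Fin n → A) (i : Fin n) : stdMon x (Pi.single i 1) = x i := by
  have := stdMon_mul_single x 0 i (fun _ _ => rfl)
  rw [stdMon_zero, one_mul, zero_add] at this
  exact this.symm

end AuxStdMon

noncomputable section AuxExp

theorem potLt_trans {I : Type*} {m : ℕ} {lt : I → I → Prop}
    (htr : ∀ a b c, lt a b → lt b c → lt a c) :
    ∀ a b c : I × Fin m, potLt lt a b → potLt lt b c → potLt lt a c := by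
  rintro ⟨a1, a2⟩ ⟨b1, b2⟩ ⟨c1, c2⟩ (h1 | ⟨h1e, h1l⟩) (h2 | ⟨h2e, h2l⟩)
  · exact Or.inl (h2.trans h1)
  · exact Or.inl (h2e ▸ h1)
  · exact Or.inl (h1e ▸ h2)
  · exact Or.inr ⟨h1e.trans h2e, htr _ _ _ h1l h2l⟩

theorem potLt_asymm {I : Type*} {m : ℕ} {lt : I → I → Prop}
    (has : ∀ a b, lt a b → lt b a → False) :
    ∀ a b : I × Fin m, potLt lt a b → potLt lt b a → False := by
  rintro ⟨a1, a2⟩ ⟨b1, b2⟩ (h1 | ⟨h1e, h1l⟩) (h2 | ⟨h2e, h2l⟩)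
  · exact absurd h1 (asymm h2)
  · exact absurd h1 (h2e ▸ lt_irrefl _)
  · exact absurd h2 (h1e ▸ lt_irrefl _)
  · exact has _ _ h1l h2l

theorem potLt_tri {I : Type*} {m : ℕ} {lt : I → I → Prop}
    (htri : ∀ a b, a = b ∨ lt a b ∨ lt b a) :
    ∀ a b : I × Fin m, a = b ∨ potLt lt a b ∨ potLt lt b a := by
  rintro ⟨a1, a2⟩ ⟨b1, b2⟩
  rcases lt_trichotomy a2 b2 with h | h | h
  · exact Or.inr (Or.inr (Or.inl h))
  · subst h
    rcases htri a1 b1 with h | h | h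
    · exact Or.inl (by rw [h])
    · exact Or.inr (Or.inl (Or.inr ⟨rfl, h⟩))
    · exact Or.inr (Or.inr (Or.inr ⟨rfl, h⟩))
  · exact Or.inr (Or.inl (Or.inl h))

theorem isExpOf_unique {k R0 I : Type*} [Field k] [AddCommGroup R0] [Module k R0] {m : ℕ}
    (b : Module.Basis I k R0) {lt : I × Fin m → I × Fin m → Prop}
    (hasym : ∀ a c, lt a c → lt c a → False)
    {h : Fin m → R0} {e e' : I × Fin m}
    (h1 : IsExpOf b lt h e) (h2 : IsExpOf b lt h e') : e = e' := by
  rcases h2.2 e.1 e.2 h1.1 with he | he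
  · exact (Prod.mk.eta (p := e)) ▸ he
  · rcases h1.2 e'.1 e'.2 h2.1 with he2 | he2
    · exact ((Prod.mk.eta (p := e')) ▸ he2).symm
    · rw [Prod.mk.eta] at he he2
      exact absurd he (fun hee => hasym _ _ hee he2)

theorem isExpOf_exists {k R0 I : Type*} [Field k] [AddCommGroup R0] [Module k R0] {m : ℕ}
    (b : Module.Basis I k R0) (lt : I × Fin m → I × Fin m → Prop)
    (htri : ∀ a c, a = c ∨ lt a c ∨ lt c a) (htr : ∀ a c d, lt a c → lt c d → lt a d)
    {h : Fin m → R0} (hne : h ≠ 0) : ∃ e, IsExpOf b lt h e := by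
  classical
  set S : Finset (I × Fin m) :=
    Finset.univ.biUnion (fun i : Fin m => (b.repr (h i)).support.image (fun β => (β, i)))
    with hS
  have hSne : S.Nonempty := by
    have hex : ∃ i, h i ≠ 0 := by
      by_contra hc; push_neg at hc; exact hne (funext hc)
    obtain ⟨i, hi⟩ := hex
    have hrne : (b.repr (h i)).support.Nonempty := by
      rw [Finsupp.support_nonempty_iff]
      intro hz
      exact hi (by simpa using (LinearEquiv.map_eq_zero_iff b.repr).1 hz)
    obtain ⟨β, hβ⟩ := hrne
    exact ⟨(β, i), Finset.mem_biUnion.2 ⟨i, Finset.mem_univ _,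
      Finset.mem_image.2 ⟨β, hβ, rfl⟩⟩⟩
  obtain ⟨e, heS, hmax⟩ := aux_exists_rel_max lt htri htr S hSne
  refine ⟨e, ?_, ?_⟩
  · obtain ⟨i, _, hmem⟩ := Finset.mem_biUnion.1 heS
    obtain ⟨β, hβ, hb⟩ := Finset.mem_image.1 hmem
    subst hb
    simpa using Finsupp.mem_support_iff.1 hβ
  · intro β i hrep
    exact hmax (β, i) (Finset.mem_biUnion.2 ⟨i, Finset.mem_univ _,
      Finset.mem_image.2 ⟨β, Finsupp.mem_support_iff.2 hrep, rfl⟩⟩)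

end AuxExp

noncomputable section AuxPBW

variable {k R : Type*} [Field k] [Ring R] [Algebra k R] {n : ℕ}

/-- The `k`-subspace of elements whose `bR`-support is `⪯`-bounded by `D`. -/
def bddSub (bR : Module.Basis (Fin n → ℕ) k R)
    (le : (Fin n → ℕ) → (Fin n → ℕ) → Prop) (D : Fin n → ℕ) : Submodule k R where
  carrier := {r | ∀ μ, bR.repr r μ ≠ 0 → le μ D}
  add_mem' := by
    intro a b ha hb μ hμ
    rw [map_add, Finsupp.add_apply] at hμ
    by_cases h1 : bR.repr a μ = 0
    · exact hb μ (by intro h2; rw [h1, h2, add_zero] at hμ; exact hμ rfl)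
    · exact ha μ h1
  zero_mem' := by intro μ hμ; simp at hμ
  smul_mem' := by
    intro c r hr μ hμ
    rw [map_smul, Finsupp.smul_apply, smul_eq_mul] at hμ
    exact hr μ (fun h0 => hμ (by rw [h0, mul_zero]))

theorem mem_bddSub {bR : Module.Basis (Fin n → ℕ) k R} {le} {D : Fin n → ℕ} {r : R} :
    r ∈ bddSub bR le D ↔ ∀ μ, bR.repr r μ ≠ 0 → le μ D := Iff.rfl

theorem mul_mem_of_repr (bR : Module.Basis (Fin n → ℕ) k R) (r z : R) (S : Submodule k R)
    (hr : ∀ μ, bR.repr r μ ≠ 0 → bR μ * z ∈ S) : r * z ∈ S := by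
  have hrr := bR.linearCombination_repr r
  rw [← hrr, Finsupp.linearCombination_apply, Finsupp.sum_mul]
  apply Submodule.sum_mem
  intro μ hμ
  have hmem : ((bR.repr r) μ) • (bR μ * z) ∈ S :=
    S.smul_mem _ (hr μ (Finsupp.mem_support_iff.1 hμ))
  simpa [smul_mul_assoc] using hmem

theorem pbw_rel {x : Fin n → R} {qc : Fin n → Fin n → k}
    {pc : Fin n → Fin n → ((Fin n → ℕ) →₀ k)} {le}
    (hpbw : IsPBW k R x qc pc le) {i j : Fin n} (hij : i < j) :
    x j * x i = qc i j • (x i * x j) + (pc i j).sum (fun γ c => c • stdMon x γ) := by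
  have hmem : quantumRel k qc pc i j ∈
      TwoSidedIdeal.span {y | ∃ i j : Fin n, i < j ∧ y = quantumRel k qc pc i j} :=
    TwoSidedIdeal.subset_span ⟨i, j, hij, rfl⟩
  have h0 : FreeAlgebra.lift k x (quantumRel k qc pc i j) = 0 :=
    (hpbw.2.2.2.2.1 _).2 hmem
  have hst : ∀ γ, FreeAlgebra.lift k x (stdMon (FreeAlgebra.ι k) γ) = stdMon x γ := by
    intro γ
    unfold stdMon
    rw [map_list_prod, List.map_map]
    congr 1
    apply List.map_congr_left
    intro i' _
    simp [map_pow]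
  unfold quantumRel at h0
  rw [map_sub, map_sub, map_mul, map_smul, map_mul, map_finsuppSum] at h0
  simp only [map_smul, FreeAlgebra.lift_ι_apply, hst] at h0
  rw [sub_sub, sub_eq_zero] at h0
  exact h0

theorem pbw_prod_bound {x : Fin n → R} {qc : Fin n → Fin n → k}
    {pc : Fin n → Fin n → ((Fin n → ℕ) →₀ k)} {le}
    (hpbw : IsPBW k R x qc pc le)
    (bR : Module.Basis (Fin n → ℕ) k R) (hbR : ∀ α, bR α = stdMon x α) :
    ∀ a b μ, bR.repr (stdMon x a * stdMon x b) μ ≠ 0 → le μ (a + b) := by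
  classical
  have hle := hpbw.1
  set F : (Fin n → ℕ) → Submodule k R := fun D => bddSub bR le D with hF
  have hbasis_mem : ∀ (μ D : Fin n → ℕ), le μ D → stdMon x μ ∈ F D := by
    intro μ D hμD ν hν
    rw [← hbR, bR.repr_self] at hν
    have hνμ : ν = μ := (Finsupp.single_apply_ne_zero.1 hν).1
    subst hνμ; exact hμD
  have hmono : ∀ {D D' : Fin n → ℕ}, le D D' → F D ≤ F D' := by
    intro D D' hDD' r hr μ hμ
    exact hle.2.2.1 _ _ _ (hr μ hμ) hDD'
  have main : ∀ D a b, le (a + b) D → stdMon x a * stdMon x b ∈ F (a + b) := by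
    intro D0
    refine (adm_wf hle).induction
      (C := fun D => ∀ a b, le (a + b) D → stdMon x a * stdMon x b ∈ F (a + b)) D0 ?_
    intro D IH
    have step1 : ∀ (N : ℕ) (a : Fin n → ℕ) (i : Fin n),
        (∑ j ∈ Finset.univ.filter (fun j => i < j), a j) ≤ N →
        le (a + Pi.single i 1) D → stdMon x a * x i ∈ F (a + Pi.single i 1) := by
      intro N
      induction N with
      | zero =>
        intro a i ht _
        have hz : ∀ j, i < j → a j = 0 := by
          intro j hj
          have := (Finset.sum_eq_zero_iff.1 (Nat.le_zero.1 ht)) j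
            (Finset.mem_filter.2 ⟨Finset.mem_univ _, hj⟩)
          exact this
        rw [stdMon_mul_single x a i hz]
        exact hbasis_mem _ _ (adm_refl hle _)
      | succ N ihN =>
        intro a i ht hD
        by_cases hz : ∀ j, i < j → a j = 0
        · rw [stdMon_mul_single x a i hz]
          exact hbasis_mem _ _ (adm_refl hle _)
        · push_neg at hz
          obtain ⟨j0, hj0i, hj0⟩ := hz
          have hsupp_ne : (Finset.univ.filter fun j => a j ≠ 0).Nonempty :=
            ⟨j0, Finset.mem_filter.2 ⟨Finset.mem_univ _, hj0⟩⟩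
          set j := Finset.max' _ hsupp_ne with hj
          have hj_mem : a j ≠ 0 :=
            (Finset.mem_filter.1 (Finset.max'_mem _ hsupp_ne)).2
          have hj_max : ∀ j', a j' ≠ 0 → j' ≤ j := fun j' hj' =>
            Finset.le_max' _ j' (Finset.mem_filter.2 ⟨Finset.mem_univ _, hj'⟩)
          have hij : i < j := lt_of_lt_of_le hj0i (hj_max j0 hj0)
          set a' : Fin n → ℕ := a - Pi.single j 1 with ha'
          have haa : a' + Pi.single j 1 = a := by
            funext m
            simp only [ha', Pi.add_apply, Pi.sub_apply]
            by_cases hmj : m = j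
            · subst hmj; simp only [Pi.single_eq_same]; omega
            · rw [Pi.single_eq_of_ne hmj]; omega
          have ha'j : ∀ m, j < m → a' m = 0 := by
            intro m hm
            have ham : a m = 0 := by
              by_contra hham; exact absurd (hj_max m hham) (not_le.2 hm)
            simp only [ha', Pi.sub_apply, ham]
            omega
          have hsplit : stdMon x a = stdMon x a' * x j := by
            rw [stdMon_mul_single x a' j ha'j, haa]
          have hrel' := pbw_rel hpbw hij
          have hcalc : stdMon x a * x i
              = qc i j • (stdMon x a' * x i * x j)
                + (pc i j).sum fun γ c => c • (stdMon x a' * stdMon x γ) := by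
            rw [hsplit, mul_assoc, hrel', mul_add, Finsupp.mul_sum, mul_smul_comm,
              ← mul_assoc]
            congr 1
            refine Finsupp.sum_congr ?_
            intro γ _
            rw [mul_smul_comm]
          rw [hcalc]
          apply Submodule.add_mem
          · apply Submodule.smul_mem
            have htb : (∑ j' ∈ Finset.univ.filter (fun j' => i < j'), a' j') ≤ N := by
              have hsum : (∑ j' ∈ Finset.univ.filter (fun j' => i < j'), a j')
                  = (∑ j' ∈ Finset.univ.filter (fun j' => i < j'), a' j') + 1 := by
                have : ∀ j' ∈ Finset.univ.filter (fun j' => i < j'),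
                    a j' = a' j' + (Pi.single j 1 : Fin n → ℕ) j' := by
                  intro j' _
                  conv_lhs => rw [← haa]
                  rfl
                rw [Finset.sum_congr rfl this, Finset.sum_add_distrib]
                congr 1
                rw [Finset.sum_eq_single_of_mem j
                  (Finset.mem_filter.2 ⟨Finset.mem_univ _, hij⟩)]
                · simp
                · intro j' _ hj'; rw [Pi.single_eq_of_ne hj']
              omega
            have hle' : le (a' + Pi.single i 1) (a + Pi.single i 1) :=
              adm_le_of_forall_le hle (by
                intro m
                simp only [Pi.add_apply, Pi.sub_apply, ha']
                have : a' m ≤ a m := by simp only [ha', Pi.sub_apply]; omega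
                omega)
            have h1 : stdMon x a' * x i ∈ F (a' + Pi.single i 1) :=
              ihN a' i htb (hle.2.2.1 _ _ _ hle' hD)
            apply mul_mem_of_repr bR
            intro μ hμ
            have hμle : le μ (a' + Pi.single i 1) := h1 μ hμ
            rw [hbR]
            have hrearr : a' + Pi.single i 1 + Pi.single j 1 = a + Pi.single i 1 := by
              rw [add_right_comm, haa]
            by_cases hcase : μ = a' + Pi.single i 1
            · subst hcase
              have hzz : ∀ m, j < m → (a' + Pi.single i 1 : Fin n → ℕ) m = 0 := by
                intro m hm
                simp only [Pi.add_apply]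
                rw [ha'j m hm, Pi.single_eq_of_ne (by omega : m ≠ i)]
                rfl
              rw [stdMon_mul_single x _ j hzz, hrearr]
              exact hbasis_mem _ _ (adm_refl hle _)
            · have hlt : ltOf le μ (a' + Pi.single i 1) := ⟨hμle, hcase⟩
              have hlt2 : ltOf le (μ + Pi.single j 1) (a + Pi.single i 1) := by
                have := ltOf_add_right hle (Pi.single j 1) hlt
                rwa [hrearr] at this
              have hltD : ltOf le (μ + Pi.single j 1) D := ltOf_le_trans hle hlt2 hD
              have hmem := IH _ hltD μ (Pi.single j 1) (adm_refl hle _)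
              rw [stdMon_single] at hmem
              exact hmono hlt2.1 hmem
          · apply Submodule.finsuppSum_mem
            intro γ hγc
            apply Submodule.smul_mem
            have hγ : γ ∈ (pc i j).support := Finsupp.mem_support_iff.2 hγc
            have hγlt : ltOf le γ (Pi.single i 1 + Pi.single j 1) :=
              hpbw.2.2.1 i j hij γ hγ
            have h2 : ltOf le (a' + γ) (a + Pi.single i 1) := by
              have := ltOf_add_left hle a' hγlt
              rwa [← add_assoc, add_right_comm, haa] at this
            have hD2 : ltOf le (a' + γ) D := ltOf_le_trans hle h2 hD
            have hmem := IH _ hD2 a' γ (adm_refl hle _)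
            exact hmono h2.1 hmem
    have step2 : ∀ (N : ℕ) (b a : Fin n → ℕ), (∑ j, b j) ≤ N → le (a + b) D →
        stdMon x a * stdMon x b ∈ F (a + b) := by
      intro N
      induction N with
      | zero =>
        intro b a hb _
        have hb0 : b = 0 := by
          funext j
          have := (Finset.sum_eq_zero_iff.1 (Nat.le_zero.1 hb)) j (Finset.mem_univ _)
          exact this
        subst hb0
        rw [stdMon_zero, mul_one, add_zero]
        exact hbasis_mem _ _ (adm_refl hle _)
      | succ N ihN =>
        intro b a hb hD
        by_cases hb0 : b = 0
        · subst hb0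
          rw [stdMon_zero, mul_one, add_zero]
          exact hbasis_mem _ _ (adm_refl hle _)
        · have hsupp_ne : (Finset.univ.filter fun j => b j ≠ 0).Nonempty := by
            by_contra hc
            rw [Finset.not_nonempty_iff_eq_empty, Finset.filter_eq_empty_iff] at hc
            exact hb0 (funext fun j => by
              have := hc (Finset.mem_univ j); simpa using this)
          set i := Finset.max' _ hsupp_ne with hi
          have hi_mem : b i ≠ 0 :=
            (Finset.mem_filter.1 (Finset.max'_mem _ hsupp_ne)).2
          have hi_max : ∀ j', b j' ≠ 0 → j' ≤ i := fun j' hj' =>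
            Finset.le_max' _ j' (Finset.mem_filter.2 ⟨Finset.mem_univ _, hj'⟩)
          set b'' : Fin n → ℕ := b - Pi.single i 1 with hb''
          have hbb : b'' + Pi.single i 1 = b := by
            funext m
            simp only [hb'', Pi.add_apply, Pi.sub_apply]
            by_cases hmi : m = i
            · subst hmi; simp only [Pi.single_eq_same]; omega
            · rw [Pi.single_eq_of_ne hmi]; omega
          have hb''i : ∀ m, i < m → b'' m = 0 := by
            intro m hm
            have hbm : b m = 0 := by
              by_contra hc; exact absurd (hi_max m hc) (not_le.2 hm)
            simp only [hb'', Pi.sub_apply, hbm]; omega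
          have hsplitb : stdMon x b = stdMon x b'' * x i := by
            rw [stdMon_mul_single x b'' i hb''i, hbb]
          have hbsum : (∑ j, b'' j) ≤ N := by
            have hsum : (∑ j, b j) = (∑ j, b'' j) + 1 := by
              have : ∀ j' ∈ (Finset.univ : Finset (Fin n)),
                  b j' = b'' j' + (Pi.single i 1 : Fin n → ℕ) j' := by
                intro j' _
                conv_lhs => rw [← hbb]
                rfl
              rw [Finset.sum_congr rfl this, Finset.sum_add_distrib]
              congr 1
              rw [Finset.sum_eq_single_of_mem i (Finset.mem_univ _)]
              · simp
              · intro j' _ hj'; rw [Pi.single_eq_of_ne hj']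
            omega
          have hle'' : le (a + b'') (a + b) :=
            adm_le_of_forall_le hle (by
              intro m
              simp only [Pi.add_apply, Pi.sub_apply, hb'']
              omega)
          have h1 : stdMon x a * stdMon x b'' ∈ F (a + b'') :=
            ihN b'' a hbsum (hle.2.2.1 _ _ _ hle'' hD)
          rw [hsplitb, ← mul_assoc]
          apply mul_mem_of_repr bR
          intro μ hμ
          have hμle : le μ (a + b'') := h1 μ hμ
          rw [hbR]
          have hre : a + b'' + Pi.single i 1 = a + b := by
            rw [add_assoc, hbb]
          have hμle2 : le (μ + Pi.single i 1) (a + b) := by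
            have := hle.2.2.2.2 _ _ (Pi.single i 1) hμle
            rwa [hre] at this
          have h2 : stdMon x μ * x i ∈ F (μ + Pi.single i 1) :=
            step1 (∑ j ∈ Finset.univ.filter (fun j => i < j), μ j) μ i le_rfl
              (hle.2.2.1 _ _ _ hμle2 hD)
          exact hmono hμle2 h2
    intro a b hab
    exact step2 (∑ j, b j) b a le_rfl hab
  intro a b μ hμ
  exact main (a + b) a b (adm_refl hle _) μ hμ

end AuxPBW

noncomputable section AuxRev

variable {n : ℕ}

theorem expRev_zero : expRev (0 : Fin n → ℕ) = 0 := funext fun _ => rfl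

theorem expRev_add (a b : Fin n → ℕ) : expRev (a + b) = expRev a + expRev b :=
  funext fun _ => rfl

theorem expRev_expRev (a : Fin n → ℕ) : expRev (expRev a) = a :=
  funext fun i => by simp [expRev, Fin.rev_rev]

theorem expRev_inj : Function.Injective (expRev (n := n)) := fun a b h => by
  rw [← expRev_expRev a, h, expRev_expRev]

end AuxRev

noncomputable section AuxEnv2

variable {k R : Type*} [Field k] [Ring R] [Algebra k R] {n : ℕ}

theorem mulE_tmul (a : R) (b : Rᵐᵒᵖ) : mulE k R (a ⊗ₜ[k] b) = a * unop b := by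
  have h1 : mulE k R (a ⊗ₜ[k] b) = (a ⊗ₜ[k] b) • (1 : R) := by
    simp only [mulE, LinearMap.toSpanSingleton_apply]
  have h2 : (a ⊗ₜ[k] b) • (1 : R) = a • b • (1 : R) :=
    TensorProduct.Algebra.smul_def a b (1 : R)
  have h3 : b • (1 : R) = unop b := by
    show (1 : R) * unop b = unop b
    rw [one_mul]
  rw [h1, h2, h3, smul_eq_mul]

theorem mulE_k_smul (a : k) (v : R ⊗[k] Rᵐᵒᵖ) :
    mulE k R (a • v) = a • mulE k R v := by
  induction v using TensorProduct.induction_on with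
  | zero => simp
  | tmul r t => rw [TensorProduct.smul_tmul', mulE_tmul, mulE_tmul, smul_mul_assoc]
  | add v1 v2 h1 h2 => rw [smul_add, map_add, map_add, h1, h2, smul_add]

theorem repr_tensorOne {x : Fin n → R}
    (bR : Module.Basis (Fin n → ℕ) k R) (hbR : ∀ α, bR α = stdMon x α)
    (bE : Module.Basis ((Fin n → ℕ) × (Fin n → ℕ)) k (R ⊗[k] Rᵐᵒᵖ))
    (hbE : ∀ αβ : (Fin n → ℕ) × (Fin n → ℕ),
      bE αβ = stdMon x αβ.1 ⊗ₜ[k] op (stdMon x (expRev αβ.2)))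
    (r : R) :
    bE.repr (r ⊗ₜ[k] (1 : Rᵐᵒᵖ))
      = Finsupp.mapDomain (fun a => (a, (0 : Fin n → ℕ))) (bR.repr r) := by
  have hmap : (bE.repr.toLinearMap.comp ((TensorProduct.mk k R Rᵐᵒᵖ).flip 1))
      = (Finsupp.lmapDomain k k (fun a : Fin n → ℕ => (a, (0 : Fin n → ℕ)))).comp
          bR.repr.toLinearMap := by
    apply bR.ext
    intro α
    simp only [LinearMap.coe_comp, LinearEquiv.coe_coe, Function.comp_apply,
      LinearMap.flip_apply, TensorProduct.mk_apply, Finsupp.lmapDomain_apply]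
    have hb : bR α ⊗ₜ[k] (1 : Rᵐᵒᵖ) = bE (α, (0 : Fin n → ℕ)) := by
      rw [hbE, hbR]
      congr 1
      rw [show expRev (0 : Fin n → ℕ) = 0 from expRev_zero, stdMon_zero, op_one]
    rw [hb, bE.repr_self, bR.repr_self, Finsupp.mapDomain_single]
  have := LinearMap.congr_fun hmap r
  simpa using this

theorem repr_oneTensor {x : Fin n → R}
    (bR : Module.Basis (Fin n → ℕ) k R) (hbR : ∀ α, bR α = stdMon x α)
    (bE : Module.Basis ((Fin n → ℕ) × (Fin n → ℕ)) k (R ⊗[k] Rᵐᵒᵖ))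
    (hbE : ∀ αβ : (Fin n → ℕ) × (Fin n → ℕ),
      bE αβ = stdMon x αβ.1 ⊗ₜ[k] op (stdMon x (expRev αβ.2)))
    (r : R) :
    bE.repr ((1 : R) ⊗ₜ[k] op r)
      = Finsupp.mapDomain (fun a => ((0 : Fin n → ℕ), expRev a)) (bR.repr r) := by
  have hmap : (bE.repr.toLinearMap.comp
        ((TensorProduct.mk k R Rᵐᵒᵖ 1).comp (MulOpposite.opLinearEquiv k).toLinearMap))
      = (Finsupp.lmapDomain k k (fun a : Fin n → ℕ => ((0 : Fin n → ℕ), expRev a))).comp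
          bR.repr.toLinearMap := by
    apply bR.ext
    intro α
    simp only [LinearMap.coe_comp, LinearEquiv.coe_coe, Function.comp_apply,
      TensorProduct.mk_apply, MulOpposite.coe_opLinearEquiv, Finsupp.lmapDomain_apply]
    have hb : (1 : R) ⊗ₜ[k] op (bR α) = bE ((0 : Fin n → ℕ), expRev α) := by
      rw [hbE, hbR]
      congr 1
      · rw [stdMon_zero]
      · rw [expRev_expRev]
    rw [hb, bE.repr_self, bR.repr_self, Finsupp.mapDomain_single]
  have := LinearMap.congr_fun hmap r
  simpa using this

end AuxEnv2

noncomputable section AuxOrd2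

variable {n : ℕ} {le : (Fin n → ℕ) → (Fin n → ℕ) → Prop}

theorem upComp_anti (hle : IsAdmissible le) :
    ∀ a b, upCompOrd le a b → upCompOrd le b a → a = b := by
  rintro a b (rfl | h1 | ⟨h1e, h1l⟩) h2
  · rfl
  all_goals rcases h2 with rfl | h2 | ⟨h2e, h2l⟩
  · rfl
  · exact absurd (hle.2.1 _ _ h1.1 h2.1) h1.2
  · exact absurd h2e.symm h1.2
  · rfl
  · exact absurd h1e.symm h2.2
  · exact absurd (hle.2.1 _ _ h1l.1 h2l.1) h1l.2

theorem downComp_anti (hle : IsAdmissible le) :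
    ∀ a b, downCompOrd le a b → downCompOrd le b a → a = b := by
  rintro a b (rfl | h1 | ⟨h1e, h1l⟩) h2
  · rfl
  all_goals rcases h2 with rfl | h2 | ⟨h2e, h2l⟩
  · rfl
  · exact absurd (hle.2.1 _ _ h1.1 h2.1) h1.2
  · exact absurd h2e.symm h1.2
  · rfl
  · exact absurd h1e.symm h2.2
  · exact absurd (hle.2.1 _ _ h1l.1 h2l.1) h1l.2

theorem elimUp_anti (hle : IsAdmissible le) :
    ∀ a b, elimUpOrd le a b → elimUpOrd le b a → a = b := by
  rintro a b (rfl | h1 | ⟨h1e, h1l⟩) h2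
  · rfl
  all_goals rcases h2 with rfl | h2 | ⟨h2e, h2l⟩
  · rfl
  · exact absurd (hle.2.1 _ _ h1.1 h2.1) h1.2
  · exact absurd h2e.symm h1.2
  · rfl
  · exact absurd h1e.symm h2.2
  · exact absurd (expRev_inj (hle.2.1 _ _ h1l.1 h2l.1)) h1l.2

theorem elimDown_anti (hle : IsAdmissible le) :
    ∀ a b, elimDownOrd le a b → elimDownOrd le b a → a = b := by
  rintro a b (rfl | h1 | ⟨h1e, h1l⟩) h2
  · rfl
  all_goals rcases h2 with rfl | h2 | ⟨h2e, h2l⟩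
  · rfl
  · exact absurd (expRev_inj (hle.2.1 _ _ h1.1 h2.1)) h1.2
  · exact absurd h2e.symm h1.2
  · rfl
  · exact absurd h1e.symm h2.2
  · exact absurd (hle.2.1 _ _ h1l.1 h2l.1) h1l.2

end AuxOrd2

noncomputable section AuxCore

/-- The common core of the covering argument, for a generic monomial embedding `ι0`
(either `α ↦ (α,0)` or `α ↦ (0,α^op)`). -/
theorem covering_core
    {k R : Type*} [Field k] [Ring R] [Algebra k R] {n s p q : ℕ}
    {le : (Fin n → ℕ) → (Fin n → ℕ) → Prop} (hle : IsAdmissible le)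
    (bR : Module.Basis (Fin n → ℕ) k R)
    (bE : Module.Basis ((Fin n → ℕ) × (Fin n → ℕ)) k (R ⊗[k] Rᵐᵒᵖ))
    {le2 : ((Fin n → ℕ) × (Fin n → ℕ)) → ((Fin n → ℕ) × (Fin n → ℕ)) → Prop}
    (hanti2 : ∀ a b, le2 a b → le2 b a → a = b)
    (H : Fin (s + p) → Fin q → R)
    {t : ℕ} (h : Fin t → (Fin (s + p) → R ⊗[k] Rᵐᵒᵖ))
    (hGB : IsGB bE (potLt (ltOf le2)) (LinearMap.ker (syzMap (R ⊗[k] Rᵐᵒᵖ) H))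
      (Set.range h))
    (ι0 : (Fin n → ℕ) → ((Fin n → ℕ) × (Fin n → ℕ)))
    (hι0inj : Function.Injective ι0)
    (hπι : ∀ α, (ι0 α).1 + expRev (ι0 α).2 = α)
    (hmono : ∀ a b, ltOf le a b → ltOf le2 (ι0 a) (ι0 b))
    (hdrop : ∀ γ a, ltOf le2 a (ι0 γ) → ltOf le (a.1 + expRev a.2) γ)
    (hsplit : ∀ c d γ, c + d = ι0 γ → ∃ γ1 δ1, c = ι0 γ1 ∧ d = ι0 δ1)
    (hmulE_bound : ∀ c μ, bR.repr (mulE k R (bE c)) μ ≠ 0 → le μ (c.1 + expRev c.2))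
    (hmulE_exact : ∀ α, mulE k R (bE (ι0 α)) = bR α)
    (f : Fin s → R) (hf0 : f ≠ 0)
    (u : Fin s → R ⊗[k] Rᵐᵒᵖ)
    (hu_repr : ∀ l, bE.repr (u l) = Finsupp.mapDomain ι0 (bR.repr (f l)))
    (h'' : Fin p → R ⊗[k] Rᵐᵒᵖ)
    (hker : Fin.append u h'' ∈ LinearMap.ker (syzMap (R ⊗[k] Rᵐᵒᵖ) H)) :
    ∃ g ∈ (Set.range fun i => mulS k R s fun l => h i (Fin.castAdd p l)) \ {0},
      ∃ γ δ i, IsExpOf bR (potLt (ltOf le)) g (γ, i) ∧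
        IsExpOf bR (potLt (ltOf le)) f (γ + δ, i) := by
  classical
  -- exponent of f
  have htr1 : ∀ a c d : Fin n → ℕ, ltOf le a c → ltOf le c d → ltOf le a d :=
    fun a c d h1 h2 => ltOf_trans hle h1 h2
  have htri1 : ∀ a c : Fin n → ℕ, a = c ∨ ltOf le a c ∨ ltOf le c a := by
    intro a c
    by_cases hac : a = c
    · exact Or.inl hac
    · rcases hle.1 a c with h1 | h1
      · exact Or.inr (Or.inl ⟨h1, hac⟩)
      · exact Or.inr (Or.inr ⟨h1, Ne.symm hac⟩)
  obtain ⟨⟨α, l⟩, hef⟩ :=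
    isExpOf_exists bR (potLt (ltOf le)) (potLt_tri htri1) (potLt_trans htr1) hf0
  set F : Fin (s + p) → R ⊗[k] Rᵐᵒᵖ := Fin.append u h'' with hFdef
  have hFcast : ∀ j : Fin s, F (Fin.castAdd p j) = u j := fun j => Fin.append_left u h'' j
  have hu_at : ∀ (j : Fin s) (β : Fin n → ℕ), bE.repr (u j) (ι0 β) = bR.repr (f j) β := by
    intro j β; rw [hu_repr j]; exact Finsupp.mapDomain_apply hι0inj _ β
  have hu_off : ∀ (j : Fin s) c, c ∉ Set.range ι0 → bE.repr (u j) c = 0 := by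
    intro j c hc; rw [hu_repr j]; exact Finsupp.mapDomain_notin_range _ _ hc
  have hcast_lt : ∀ (j : Fin s) (j' : Fin p),
      (Fin.castAdd p j : Fin (s + p)) < Fin.natAdd s j' := by
    intro j j'
    rw [Fin.lt_def]
    simp only [Fin.coe_castAdd, Fin.coe_natAdd]
    omega
  have hFexp : IsExpOf bE (potLt (ltOf le2)) F (ι0 α, Fin.castAdd p l) := by
    constructor
    · show bE.repr (F (Fin.castAdd p l)) (ι0 α) ≠ 0
      rw [hFcast, hu_at]
      exact hef.1
    · intro c i hc
      induction i using Fin.addCases with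
      | left j =>
        rw [hFcast] at hc
        by_cases hcr : c ∈ Set.range ι0
        · obtain ⟨β, rfl⟩ := hcr
          rw [hu_at] at hc
          rcases hef.2 β j hc with heq | hlt
          · left
            have hβ : β = α := congrArg Prod.fst heq
            have hj : j = l := congrArg Prod.snd heq
            subst hβ; subst hj; rfl
          · right
            rcases hlt with hpos | ⟨hpe, hlt1⟩
            · left
              rw [Fin.lt_def] at hpos ⊢
              simpa using hpos
            · right
              have hj2 : j = l := hpe
              refine ⟨?_, hmono β α hlt1⟩
              show Fin.castAdd p j = Fin.castAdd p l
              rw [hj2]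
        · exact absurd (hu_off j c hcr) hc
      | right j =>
        right; left
        exact hcast_lt l j
  have hF0 : F ≠ 0 := by
    intro h0
    have h1 := hFexp.1
    rw [h0] at h1
    simp at h1
  obtain ⟨g0, hg0mem, γ2, δ2, j, hg0exp, hFexp2⟩ := hGB.2.2 F hker hF0
  have has2 : ∀ a b, ltOf le2 a b → ltOf le2 b a → False :=
    fun a b h1 h2 => h1.2 (hanti2 _ _ h1.1 h2.1)
  have huniq := isExpOf_unique bE (potLt_asymm has2) hFexp2 hFexp
  have hj : j = Fin.castAdd p l := congrArg Prod.snd huniq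
  have hγδ : γ2 + δ2 = ι0 α := congrArg Prod.fst huniq
  subst hj
  obtain ⟨γ3, δ3, hγ2, hδ2⟩ := hsplit γ2 δ2 α hγδ
  have hα : γ3 + δ3 = α := by
    have h1 : ι0 γ3 + ι0 δ3 = ι0 α := by rw [← hγ2, ← hδ2, hγδ]
    have h2 := hπι α
    rw [← h1] at h2
    have h3 : ((ι0 γ3).1 + expRev (ι0 γ3).2) + ((ι0 δ3).1 + expRev (ι0 δ3).2) = α := by
      rw [← h2]
      show (ι0 γ3).1 + expRev (ι0 γ3).2 + ((ι0 δ3).1 + expRev (ι0 δ3).2)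
        = (ι0 γ3 + ι0 δ3).1 + expRev ((ι0 γ3 + ι0 δ3).2)
      rw [Prod.fst_add, Prod.snd_add, expRev_add]
      abel
    rw [hπι, hπι] at h3
    exact h3
  -- leading exponent of the image
  have hzero : ∀ j : Fin s, j < l → g0 (Fin.castAdd p j) = 0 := by
    intro j hjl
    have hre : bE.repr (g0 (Fin.castAdd p j)) = 0 := by
      ext c
      rw [Finsupp.coe_zero, Pi.zero_apply]
      by_contra hc
      rcases hg0exp.2 c (Fin.castAdd p j) hc with heq | hlt
      · have := congrArg Prod.snd heq
        simp only at this
        rw [Fin.ext_iff] at this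
        simp only [Fin.coe_castAdd] at this
        omega
      · rcases hlt with hpos | ⟨hpe, _⟩
        · rw [Fin.lt_def] at hpos
          simp only [Fin.coe_castAdd] at hpos
          omega
        · rw [Fin.ext_iff] at hpe
          simp only [Fin.coe_castAdd] at hpe
          omega
    exact (LinearEquiv.map_eq_zero_iff bE.repr).1 hre
  set w : R ⊗[k] Rᵐᵒᵖ := g0 (Fin.castAdd p l) with hw
  have hc0ne : bE.repr w γ2 ≠ 0 := hg0exp.1
  have hwlow : ∀ c, bE.repr w c ≠ 0 → c = γ2 ∨ ltOf le2 c γ2 := by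
    intro c hc
    rcases hg0exp.2 c (Fin.castAdd p l) hc with heq | hlt
    · left; exact congrArg Prod.fst heq
    · rcases hlt with hpos | ⟨_, hlt1⟩
      · exact absurd hpos (lt_irrefl _)
      · right; exact hlt1
  have hexpand : ∀ (wE : R ⊗[k] Rᵐᵒᵖ) (ν : Fin n → ℕ), bR.repr (mulE k R wE) ν
      = (bE.repr wE).sum (fun c a => a * bR.repr (mulE k R (bE c)) ν) := by
    intro wE ν
    conv_lhs => rw [← bE.linearCombination_repr wE]
    rw [Finsupp.linearCombination_apply]
    have e1 : mulE k R ((bE.repr wE).sum fun c a => a • bE c)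
        = (bE.repr wE).sum fun c a => a • mulE k R (bE c) := by
      rw [map_finsuppSum]
      exact Finsupp.sum_congr (fun c _ => mulE_k_smul _ _)
    rw [e1, map_finsuppSum, Finsupp.sum_apply]
    exact Finsupp.sum_congr (fun c _ => by rw [map_smul, Finsupp.smul_apply, smul_eq_mul])
  have hval : bR.repr (mulE k R w) γ3 = bE.repr w γ2 := by
    rw [hexpand, Finsupp.sum, Finset.sum_eq_single γ2]
    · rw [hγ2, hmulE_exact, bR.repr_self, Finsupp.single_eq_same, mul_one]
    · intro c hcsup hcne
      have hlow := hwlow c (Finsupp.mem_support_iff.1 hcsup)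
      rcases hlow with rfl | hlt
      · exact absurd rfl hcne
      · have hz : bR.repr (mulE k R (bE c)) γ3 = 0 := by
          by_contra hne
          have hb := hmulE_bound c _ hne
          have hd : ltOf le (c.1 + expRev c.2) γ3 := hdrop γ3 c (hγ2 ▸ hlt)
          exact hd.2 (hle.2.1 _ _ hd.1 hb)
        rw [hz, mul_zero]
    · intro hnotin
      rw [Finsupp.notMem_support_iff.1 hnotin, zero_mul]
  have hbound : ∀ ν, bR.repr (mulE k R w) ν ≠ 0 → ν = γ3 ∨ ltOf le ν γ3 := by
    intro ν hν
    by_cases hcase : ν = γ3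
    · exact Or.inl hcase
    · right
      rw [hexpand] at hν
      have hex : ∃ c ∈ (bE.repr w).support,
          (bE.repr w) c * bR.repr (mulE k R (bE c)) ν ≠ 0 := by
        by_contra hcon
        push_neg at hcon
        exact hν (Finset.sum_eq_zero hcon)
      obtain ⟨c, hcsup, hterm⟩ := hex
      have hrne : bR.repr (mulE k R (bE c)) ν ≠ 0 := fun h0 => hterm (by rw [h0, mul_zero])
      have hb := hmulE_bound c ν hrne
      rcases hwlow c (Finsupp.mem_support_iff.1 hcsup) with rfl | hlt
      · rw [hγ2, hπι] at hb
        exact ⟨hb, hcase⟩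
      · have hd : ltOf le (c.1 + expRev c.2) γ3 := hdrop γ3 c (hγ2 ▸ hlt)
        exact le_ltOf_trans hle hb hd
  set g : Fin s → R := mulS k R s (fun l' => g0 (Fin.castAdd p l')) with hg
  have hgl : ∀ l' : Fin s, g l' = mulE k R (g0 (Fin.castAdd p l')) := fun l' => rfl
  have hgexp : IsExpOf bR (potLt (ltOf le)) g (γ3, l) := by
    constructor
    · show bR.repr (g l) γ3 ≠ 0
      rw [hgl l]
      rw [show g0 (Fin.castAdd p l) = w from rfl]
      rw [hval]
      exact hc0ne
    · intro ν j hν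
      rcases lt_trichotomy j l with hjl | rfl | hlj
      · rw [hgl j, hzero j hjl, map_zero] at hν
        simp at hν
      · rw [hgl j] at hν
        rcases hbound ν hν with rfl | hlt
        · left; rfl
        · right; right; exact ⟨rfl, hlt⟩
      · right; left; exact hlj
  have hgne : g ≠ 0 := by
    intro h0
    have h1 := hgexp.1
    rw [h0] at h1
    simp at h1
  obtain ⟨i0, hi0⟩ := hg0mem
  refine ⟨g, ⟨⟨i0, ?_⟩, hgne⟩, γ3, δ3, l, hgexp, ?_⟩
  · show mulS k R s (fun l' => h i0 (Fin.castAdd p l')) = g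
    rw [hi0]
  · rw [hα]
    exact hef

end AuxCore

/-- Let `R = k{x₁,…,xₙ; Q, ⪯}` be a PBW algebra, `M ⊆ R^s` an
`R`-sub-bimodule, and `H = [H₁; H₂]` an `(s+p) × q` matrix over `R` (rows indexed by
`Fin (s+p)`, the first `s` rows forming `H₁`) satisfying: (i)
`Σ_l h_l • H₁_l = Σ_l (𝔪(h_l)⊗1) • H₁_l` for all `h ∈ (R^env)^s`, and (ii)
`M = {h ∈ R^s : ∃ h'' ∈ (R^env)^p, (h⊗1, h'') ∈ Syz(H)}`.  Exponents in `(R^env)^{s+p}` are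
measured via the standard-monomial basis `bE` of `R^env`, any of the four orders `⪯^c`,
`⪯_c`, `⪯*`, `⪯_*` on `ℕ^{2n}`, and the POT order; exponents in `R^s` via the
standard-monomial basis `bR` of `R`, `⪯`, and the POT order.  If `{h₁,…,h_t}` is a left
Gröbner basis of `Syz(H) ⊆ (R^env)^{s+p}` with `hᵢ'` the first `s` coordinates of `hᵢ`,
then `{𝔪^s(h₁'),…,𝔪^s(h_t')} \ {0}` is a two-sided Gröbner basis of `M` for POT. -/
theorem twoSided_groebner_of_syz_groebner
    {k R : Type*} [Field k] [Ring R] [Algebra k R] {n s p q : ℕ}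
    (hs : 1 ≤ s) (hp : 1 ≤ p) (hq : 1 ≤ q)
    (x : Fin n → R) (qc : Fin n → Fin n → k) (pc : Fin n → Fin n → ((Fin n → ℕ) →₀ k))
    (le : (Fin n → ℕ) → (Fin n → ℕ) → Prop) (hpbw : IsPBW k R x qc pc le)
    (bR : Module.Basis (Fin n → ℕ) k R) (hbR : ∀ α, bR α = stdMon x α)
    (bE : Module.Basis ((Fin n → ℕ) × (Fin n → ℕ)) k (R ⊗[k] Rᵐᵒᵖ))
    (hbE : ∀ αβ : (Fin n → ℕ) × (Fin n → ℕ),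
      bE αβ = stdMon x αβ.1 ⊗ₜ[k] op (stdMon x (expRev αβ.2)))
    (le2 : ((Fin n → ℕ) × (Fin n → ℕ)) → ((Fin n → ℕ) × (Fin n → ℕ)) → Prop)
    (hle2 : le2 = upCompOrd le ∨ le2 = downCompOrd le ∨
      le2 = elimUpOrd le ∨ le2 = elimDownOrd le)
    (M : Submodule (R ⊗[k] Rᵐᵒᵖ) (Fin s → R))
    (H : Fin (s + p) → Fin q → R)
    (hi : ∀ h : Fin s → R ⊗[k] Rᵐᵒᵖ,
      ∑ l, h l • H (Fin.castAdd p l) =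
        ∑ l, ((mulE k R (h l) : R) ⊗ₜ[k] (1 : Rᵐᵒᵖ)) • H (Fin.castAdd p l))
    (hii : (M : Set (Fin s → R)) =
      {h : Fin s → R | ∃ h'' : Fin p → R ⊗[k] Rᵐᵒᵖ,
        Fin.append (tensorOne k h) h'' ∈ LinearMap.ker (syzMap (R ⊗[k] Rᵐᵒᵖ) H)})
    {t : ℕ} (h : Fin t → (Fin (s + p) → R ⊗[k] Rᵐᵒᵖ))
    (hGB : IsGB bE (potLt (ltOf le2)) (LinearMap.ker (syzMap (R ⊗[k] Rᵐᵒᵖ) H))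
      (Set.range h)) :
    IsGB bR (potLt (ltOf le)) M
      ((Set.range fun i => mulS k R s fun l => h i (Fin.castAdd p l)) \ {0}) := by
  classical
  have hle := hpbw.1
  have hPB := pbw_prod_bound hpbw bR hbR
  have hmulE_bE : ∀ c : (Fin n → ℕ) × (Fin n → ℕ),
      mulE k R (bE c) = stdMon x c.1 * stdMon x (expRev c.2) := by
    intro c
    rw [hbE, mulE_tmul, unop_op]
  have hmulE_bound : ∀ (c : (Fin n → ℕ) × (Fin n → ℕ)) μ,
      bR.repr (mulE k R (bE c)) μ ≠ 0 → le μ (c.1 + expRev c.2) := by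
    intro c μ hμ
    rw [hmulE_bE] at hμ
    exact hPB _ _ _ hμ
  have hmulE_t1 : ∀ r : R, mulE k R (r ⊗ₜ[k] (1 : Rᵐᵒᵖ)) = r := by
    intro r; rw [mulE_tmul, unop_one, mul_one]
  have hmulE_1t : ∀ r : R, mulE k R ((1 : R) ⊗ₜ[k] op r) = r := by
    intro r; rw [mulE_tmul, unop_op, one_mul]
  have hsyz_append : ∀ (u : Fin s → R ⊗[k] Rᵐᵒᵖ) (v : Fin p → R ⊗[k] Rᵐᵒᵖ),
      syzMap (R ⊗[k] Rᵐᵒᵖ) H (Fin.append u v)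
        = ∑ l, u l • H (Fin.castAdd p l) + ∑ j, v j • H (Fin.natAdd s j) := by
    intro u v
    show ∑ i, Fin.append u v i • H i = _
    rw [Fin.sum_univ_add]
    congr 1
    · exact Finset.sum_congr rfl fun l _ => by rw [Fin.append_left]
    · exact Finset.sum_congr rfl fun j _ => by rw [Fin.append_right]
  have hswap : ∀ (u u' : Fin s → R ⊗[k] Rᵐᵒᵖ) (v : Fin p → R ⊗[k] Rᵐᵒᵖ),
      (∀ l, mulE k R (u l) = mulE k R (u' l)) →
      syzMap (R ⊗[k] Rᵐᵒᵖ) H (Fin.append u v)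
        = syzMap (R ⊗[k] Rᵐᵒᵖ) H (Fin.append u' v) := by
    intro u u' v huu
    rw [hsyz_append, hsyz_append]
    congr 1
    rw [hi u, hi u']
    refine Finset.sum_congr rfl fun l _ => ?_
    rw [huu l]
  have happend : ∀ F : Fin (s + p) → R ⊗[k] Rᵐᵒᵖ,
      Fin.append (fun l => F (Fin.castAdd p l)) (fun j => F (Fin.natAdd s j)) = F := by
    intro F; funext i
    induction i using Fin.addCases with
    | left j => rw [Fin.append_left]
    | right j => rw [Fin.append_right]
  have himg : ∀ F : Fin (s + p) → R ⊗[k] Rᵐᵒᵖ,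
      F ∈ LinearMap.ker (syzMap (R ⊗[k] Rᵐᵒᵖ) H) →
      mulS k R s (fun l => F (Fin.castAdd p l)) ∈ M := by
    intro F hF
    have hmem : mulS k R s (fun l => F (Fin.castAdd p l)) ∈ (M : Set (Fin s → R)) := by
      rw [hii]
      refine ⟨fun j => F (Fin.natAdd s j), ?_⟩
      rw [LinearMap.mem_ker]
      have hsw := hswap (tensorOne k (mulS k R s fun l => F (Fin.castAdd p l)))
        (fun l => F (Fin.castAdd p l)) (fun j => F (Fin.natAdd s j))
        (fun l => hmulE_t1 _)
      rw [hsw, happend F]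
      exact LinearMap.mem_ker.1 hF
    exact hmem
  have hMker1 : ∀ f : Fin s → R, f ∈ M →
      ∃ h'', Fin.append (tensorOne k f) h'' ∈ LinearMap.ker (syzMap (R ⊗[k] Rᵐᵒᵖ) H) := by
    intro f hf
    have hmem : f ∈ (M : Set (Fin s → R)) := hf
    rw [hii] at hmem
    exact hmem
  have hMker2 : ∀ f : Fin s → R, f ∈ M →
      ∃ h'', Fin.append (oneTensor k f) h'' ∈ LinearMap.ker (syzMap (R ⊗[k] Rᵐᵒᵖ) H) := by
    intro f hf
    obtain ⟨h'', hk⟩ := hMker1 f hf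
    refine ⟨h'', ?_⟩
    rw [LinearMap.mem_ker]
    have hsw := hswap (oneTensor k f) (tensorOne k f) h'' (fun l => by
      show mulE k R ((1 : R) ⊗ₜ[k] op (f l)) = mulE k R (f l ⊗ₜ[k] (1 : Rᵐᵒᵖ))
      rw [hmulE_1t, hmulE_t1])
    rw [hsw]
    exact LinearMap.mem_ker.1 hk
  have hG1 : (Set.range fun i => mulS k R s fun l => h i (Fin.castAdd p l)) \ {0}
      ⊆ (M : Set (Fin s → R)) \ {0} := by
    rintro g ⟨⟨i0, rfl⟩, hg0⟩
    refine ⟨?_, hg0⟩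
    have hker : h i0 ∈ LinearMap.ker (syzMap (R ⊗[k] Rᵐᵒᵖ) H) := (hGB.1 ⟨i0, rfl⟩).1
    exact himg (h i0) hker
  -- shared data for the two embeddings
  have hι1inj : Function.Injective (fun a : Fin n → ℕ => (a, (0 : Fin n → ℕ))) :=
    fun a b hab => congrArg Prod.fst hab
  have hι2inj : Function.Injective (fun a : Fin n → ℕ => ((0 : Fin n → ℕ), expRev a)) :=
    fun a b hab => expRev_inj (congrArg Prod.snd hab)
  have hπι1 : ∀ α : Fin n → ℕ,
      ((fun a : Fin n → ℕ => (a, (0 : Fin n → ℕ))) α).1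
        + expRev ((fun a : Fin n → ℕ => (a, (0 : Fin n → ℕ))) α).2 = α := by
    intro α
    show α + expRev 0 = α
    rw [expRev_zero, add_zero]
  have hπι2 : ∀ α : Fin n → ℕ,
      ((fun a : Fin n → ℕ => ((0 : Fin n → ℕ), expRev a)) α).1
        + expRev ((fun a : Fin n → ℕ => ((0 : Fin n → ℕ), expRev a)) α).2 = α := by
    intro α
    show 0 + expRev (expRev α) = α
    rw [expRev_expRev, zero_add]
  have hsplit1 : ∀ (c d : (Fin n → ℕ) × (Fin n → ℕ)) (γ : Fin n → ℕ),
      c + d = (fun a : Fin n → ℕ => (a, (0 : Fin n → ℕ))) γ →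
      ∃ γ1 δ1, c = (γ1, (0 : Fin n → ℕ)) ∧ d = (δ1, (0 : Fin n → ℕ)) := by
    intro c d γ hcd
    have h2 : c.2 + d.2 = 0 := congrArg Prod.snd hcd
    have hc2 : c.2 = 0 := by
      funext i
      have := congrFun h2 i
      simp only [Pi.add_apply, Pi.zero_apply] at this ⊢
      omega
    have hd2 : d.2 = 0 := by
      funext i
      have := congrFun h2 i
      simp only [Pi.add_apply, Pi.zero_apply] at this ⊢
      omega
    exact ⟨c.1, d.1, Prod.ext_iff.2 ⟨rfl, hc2⟩, Prod.ext_iff.2 ⟨rfl, hd2⟩⟩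
  have hsplit2 : ∀ (c d : (Fin n → ℕ) × (Fin n → ℕ)) (γ : Fin n → ℕ),
      c + d = (fun a : Fin n → ℕ => ((0 : Fin n → ℕ), expRev a)) γ →
      ∃ γ1 δ1, c = ((0 : Fin n → ℕ), expRev γ1) ∧ d = ((0 : Fin n → ℕ), expRev δ1) := by
    intro c d γ hcd
    have h2 : c.1 + d.1 = 0 := congrArg Prod.fst hcd
    have hc1 : c.1 = 0 := by
      funext i
      have := congrFun h2 i
      simp only [Pi.add_apply, Pi.zero_apply] at this ⊢
      omega
    have hd1 : d.1 = 0 := by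
      funext i
      have := congrFun h2 i
      simp only [Pi.add_apply, Pi.zero_apply] at this ⊢
      omega
    exact ⟨expRev c.2, expRev d.2,
      Prod.ext_iff.2 ⟨hc1, (expRev_expRev c.2).symm⟩,
      Prod.ext_iff.2 ⟨hd1, (expRev_expRev d.2).symm⟩⟩
  have hexact1 : ∀ α : Fin n → ℕ,
      mulE k R (bE ((fun a : Fin n → ℕ => (a, (0 : Fin n → ℕ))) α)) = bR α := by
    intro α
    rw [hmulE_bE]
    show stdMon x α * stdMon x (expRev 0) = bR α
    rw [expRev_zero, stdMon_zero, mul_one, hbR]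
  have hexact2 : ∀ α : Fin n → ℕ,
      mulE k R (bE ((fun a : Fin n → ℕ => ((0 : Fin n → ℕ), expRev a)) α)) = bR α := by
    intro α
    rw [hmulE_bE]
    show stdMon x 0 * stdMon x (expRev (expRev α)) = bR α
    rw [expRev_expRev, stdMon_zero, one_mul, hbR]
  refine ⟨hG1, ?_, ?_⟩
  · -- span G = M
    apply le_antisymm
    · rw [Submodule.span_le]
      intro g hg
      exact (hG1 hg).1
    · intro f hf
      obtain ⟨h'', hker⟩ := hMker1 f hf
      rw [← hGB.2.1, Submodule.mem_span_range_iff_exists_fun] at hker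
      obtain ⟨c, hc⟩ := hker
      have hΨapp : ∀ F : Fin (s + p) → R ⊗[k] Rᵐᵒᵖ,
          ((mulS k R s).comp (LinearMap.funLeft (R ⊗[k] Rᵐᵒᵖ) (R ⊗[k] Rᵐᵒᵖ)
            (Fin.castAdd p))) F = mulS k R s (fun l => F (Fin.castAdd p l)) :=
        fun F => rfl
      have hfΨ : f = ((mulS k R s).comp (LinearMap.funLeft (R ⊗[k] Rᵐᵒᵖ) (R ⊗[k] Rᵐᵒᵖ)
          (Fin.castAdd p))) (Fin.append (tensorOne k f) h'') := by
        rw [hΨapp]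
        have h1 : (fun l => Fin.append (tensorOne k f) h'' (Fin.castAdd p l))
            = tensorOne k f := funext fun l => Fin.append_left _ _ l
        rw [h1]
        funext l
        exact (hmulE_t1 (f l)).symm
      rw [hfΨ, ← hc, map_sum]
      apply Submodule.sum_mem
      intro i _
      rw [map_smul]
      by_cases hz : ((mulS k R s).comp (LinearMap.funLeft (R ⊗[k] Rᵐᵒᵖ) (R ⊗[k] Rᵐᵒᵖ)
          (Fin.castAdd p))) (h i) = 0
      · rw [hz, smul_zero]; exact Submodule.zero_mem _
      · refine Submodule.smul_mem _ _ (Submodule.subset_span ⟨⟨i, rfl⟩, hz⟩)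
  · -- covering
    intro f hfM hf0
    rcases hle2 with rfl | rfl | rfl | rfl
    · -- upCompOrd : use tensorOne
      obtain ⟨h'', hker⟩ := hMker1 f hfM
      refine covering_core hle bR bE (upComp_anti hle) H h hGB
        (fun a => (a, (0 : Fin n → ℕ))) hι1inj hπι1 ?_ ?_ hsplit1 hmulE_bound hexact1
        f hf0 (tensorOne k f) (fun l => repr_tensorOne bR hbR bE hbE (f l)) h'' hker
      · intro a b hab
        refine ⟨Or.inr (Or.inl ?_), fun hh => hab.2 (congrArg Prod.fst hh)⟩
        show ltOf le (a + expRev 0) (b + expRev 0)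
        rw [expRev_zero, add_zero, add_zero]
        exact hab
      · rintro γ a ⟨h1, hne⟩
        rcases h1 with heq | hP | ⟨hQe, hQl⟩
        · exact absurd heq hne
        · show ltOf le (a.1 + expRev a.2) γ
          have : ltOf le (a.1 + expRev a.2) (γ + expRev (0 : Fin n → ℕ)) := hP
          rwa [expRev_zero, add_zero] at this
        · exfalso
          have hQl' : ltOf le (expRev a.2) (expRev (0 : Fin n → ℕ)) := hQl
          rw [expRev_zero] at hQl'
          exact hQl'.2 (adm_zero_eq hle hQl'.1)
    · -- downCompOrd : use oneTensor
      obtain ⟨h'', hker⟩ := hMker2 f hfM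
      refine covering_core hle bR bE (downComp_anti hle) H h hGB
        (fun a => ((0 : Fin n → ℕ), expRev a)) hι2inj hπι2 ?_ ?_ hsplit2 hmulE_bound hexact2
        f hf0 (oneTensor k f) (fun l => repr_oneTensor bR hbR bE hbE (f l)) h'' hker
      · intro a b hab
        refine ⟨Or.inr (Or.inl ?_),
          fun hh => hab.2 (expRev_inj (congrArg Prod.snd hh))⟩
        show ltOf le (0 + expRev (expRev a)) (0 + expRev (expRev b))
        rw [expRev_expRev, expRev_expRev, zero_add, zero_add]
        exact hab
      · rintro γ a ⟨h1, hne⟩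
        rcases h1 with heq | hP | ⟨hQe, hQl⟩
        · exact absurd heq hne
        · show ltOf le (a.1 + expRev a.2) γ
          have : ltOf le (a.1 + expRev a.2) (0 + expRev (expRev γ)) := hP
          rwa [expRev_expRev, zero_add] at this
        · exfalso
          exact hQl.2 (adm_zero_eq hle hQl.1)
    · -- elimUpOrd : use oneTensor
      obtain ⟨h'', hker⟩ := hMker2 f hfM
      refine covering_core hle bR bE (elimUp_anti hle) H h hGB
        (fun a => ((0 : Fin n → ℕ), expRev a)) hι2inj hπι2 ?_ ?_ hsplit2 hmulE_bound hexact2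
        f hf0 (oneTensor k f) (fun l => repr_oneTensor bR hbR bE hbE (f l)) h'' hker
      · intro a b hab
        refine ⟨Or.inr (Or.inr ⟨rfl, ?_, fun hh => hab.2 (expRev_inj hh)⟩),
          fun hh => hab.2 (expRev_inj (congrArg Prod.snd hh))⟩
        show le (expRev (expRev a)) (expRev (expRev b))
        rw [expRev_expRev, expRev_expRev]
        exact hab.1
      · rintro γ a ⟨h1, hne⟩
        rcases h1 with heq | hP | ⟨hQe, hQl⟩
        · exact absurd heq hne
        · exfalso
          exact hP.2 (adm_zero_eq hle hP.1)
        · show ltOf le (a.1 + expRev a.2) γ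
          rw [show a.1 = 0 from hQe, zero_add]
          constructor
          · have := hQl.1
            show le (expRev a.2) γ
            have h3 : le (expRev a.2) (expRev (expRev γ)) := this
            rwa [expRev_expRev] at h3
          · intro hh
            apply hQl.2
            show a.2 = expRev γ
            rw [← hh, expRev_expRev]
    · -- elimDownOrd : use tensorOne
      obtain ⟨h'', hker⟩ := hMker1 f hfM
      refine covering_core hle bR bE (elimDown_anti hle) H h hGB
        (fun a => (a, (0 : Fin n → ℕ))) hι1inj hπι1 ?_ ?_ hsplit1 hmulE_bound hexact1
        f hf0 (tensorOne k f) (fun l => repr_tensorOne bR hbR bE hbE (f l)) h'' hker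
      · intro a b hab
        exact ⟨Or.inr (Or.inr ⟨rfl, hab⟩), fun hh => hab.2 (congrArg Prod.fst hh)⟩
      · rintro γ a ⟨h1, hne⟩
        rcases h1 with heq | hP | ⟨hQe, hQl⟩
        · exact absurd heq hne
        · exfalso
          have hP' : ltOf (opOrd le) a.2 (0 : Fin n → ℕ) := hP
          have h1' : le (expRev a.2) (expRev (0 : Fin n → ℕ)) := hP'.1
          rw [expRev_zero] at h1'
          have h2' : expRev a.2 ≠ 0 := by
            intro hh
            apply hP'.2
            have := congrArg expRev hh
            rwa [expRev_expRev, expRev_zero] at this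
          exact h2' (adm_zero_eq hle h1')
        · show ltOf le (a.1 + expRev a.2) γ
          rw [show a.2 = 0 from hQe, expRev_zero, add_zero]
          exact hQl
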